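/- Let l, r ≥ 1 be integers and let R = {−l, r} ⊆ ℤ. Then for every q ≥ 2, the supremum of R_q(X) over all R-recoverable systems X over alphabets of size q equals gcd(l, r)/(l + r). -/

import Mathlib

/-!
Recoverability from the positions `i - l` and `i + r` says that `x (i + l)` is a function of
`x i` and `x (i + (l + r))`. By Bézout, every `i ∈ [0, n)` is `c + j * l + k * (l + r)` with
`0 ≤ c < gcd l r`, `0 ≤ j < l + r` and `k` in a range of length `n / (l + r) + O(1)`, so the
symbols at the positions `c + k * (l + r)` determine the whole block, and
`R_q(X) ≤ gcd l r / (l + r)`. Conversely, the sequences depending only on `i / (l + r)` and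
`i % gcd l r` form a recoverable system of that rate: `x i = x (i + r)` when `i % (l + r) < l`,
and `x i = x (i - l)` otherwise.
-/

/-- An `R`-recoverable system on `ℤ`: every symbol `x_i` is a function of the
symbols in positions `i + R`. -/
def IsRecoverable {Q : Type*} (R : Set ℤ) (X : Set (ℤ → Q)) : Prop :=
  ∀ i : ℤ, ∃ f : (ℤ → Q) → Q,
    (∀ x y : ℤ → Q, (∀ j ∈ R, x (i + j) = y (i + j)) → f x = f y) ∧
    ∀ x ∈ X, f x = x i

/-- `|B_n(X)|`: the number of restrictions of elements of `X` to `{0, …, n−1}`. -/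
noncomputable def blockCount {Q : Type*} (X : Set (ℤ → Q)) (n : ℕ) : ℕ :=
  Nat.card ↥((fun x : ℤ → Q => fun i : Fin n => x ((i : ℕ) : ℤ)) '' X)

/-- The rate `R_q(X) = limsup_{n→∞} (1/n) log_q |B_n(X)|`. -/
noncomputable def rate (q : ℕ) {Q : Type*} (X : Set (ℤ → Q)) : ℝ :=
  Filter.limsup (fun n : ℕ => Real.logb q (blockCount X n) / n) Filter.atTop

open Filter Topology

theorem IsRecoverable.eq_of_forall_eq {Q : Type*} {R : Set ℤ} {X : Set (ℤ → Q)}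
    (hX : IsRecoverable R X) {x y : ℤ → Q} (hx : x ∈ X) (hy : y ∈ X) (i : ℤ)
    (h : ∀ j ∈ R, x (i + j) = y (i + j)) : x i = y i := by
  obtain ⟨f, hf, hfX⟩ := hX i
  rw [← hfX x hx, ← hfX y hy, hf x y h]

theorem IsRecoverable.eq_add_of_eq_of_eq {Q : Type*} {l r : ℕ} {X : Set (ℤ → Q)}
    (hX : IsRecoverable {-(l : ℤ), (r : ℤ)} X) {x y : ℤ → Q} (hx : x ∈ X) (hy : y ∈ X)
    {i : ℤ} (h₀ : x i = y i) (h₁ : x (i + (l + r)) = y (i + (l + r))) :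
    x (i + l) = y (i + l) := by
  refine hX.eq_of_forall_eq hx hy (i + l) ?_
  rintro j (rfl | rfl)
  · simpa using h₀
  · simpa [add_assoc] using h₁

theorem add_mul_add_mul_of_step {P : ℤ → Prop} {a p : ℤ}
    (step : ∀ i, P i → P (i + p) → P (i + a)) {i₀ : ℤ} {m : ℕ}
    (base : ∀ k ≤ m, P (i₀ + k * p)) :
    ∀ j k : ℕ, j + k ≤ m → P (i₀ + j * a + k * p) := by
  intro j
  induction j with
  | zero => intro k hk; simpa using base k (by omega)
  | succ j ih =>
    intro k hjk
    have h : P (i₀ + j * a + k * p + p) := by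
      convert ih (k + 1) (by omega) using 1; push_cast; ring
    convert step _ (ih k (by omega)) h using 1
    push_cast
    ring

theorem exists_eq_add_mul_add_mul_gcd (l r : ℕ) (hlr : 0 < l + r) (i : ℤ) :
    ∃ c j k : ℤ, 0 ≤ c ∧ c < Nat.gcd l r ∧ 0 ≤ j ∧ j < l + r ∧
      i = c + j * l + k * (l + r) := by
  set d : ℤ := ((Nat.gcd l r : ℕ) : ℤ)
  set p : ℤ := l + r
  have hd : 0 < d := by simp only [d]; exact_mod_cast Nat.gcd_pos_iff.mpr (by omega)
  have hp : 0 < p := by simp only [p]; exact_mod_cast hlr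
  have bezout : d = l * Int.gcdA l r + r * Int.gcdB l r := by
    rw [← Int.gcd_eq_gcd_ab, Int.gcd_natCast_natCast]
  set a := i / d * (Int.gcdA l r - Int.gcdB l r)
  refine ⟨i % d, a % p, i / d * Int.gcdB l r + a / p * l, Int.emod_nonneg _ hd.ne',
    Int.emod_lt_of_pos _ hd, Int.emod_nonneg _ hp.ne', Int.emod_lt_of_pos _ hp, ?_⟩
  have hi := Int.mul_ediv_add_emod i d
  have ha := Int.mul_ediv_add_emod a p
  linear_combination -hi + i / d * bezout - l * ha

theorem forall_Ico_of_step {P : ℤ → Prop} {l r : ℕ} (hlr : 0 < l + r)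
    (step : ∀ i, P i → P (i + (l + r)) → P (i + l)) (n : ℕ)
    (base : ∀ c < Nat.gcd l r, ∀ k ≤ n / (l + r) + l + (l + r),
      P (c + ((k : ℤ) - l) * (l + r))) :
    ∀ i : ℤ, 0 ≤ i → i < n → P i := by
  intro i hi₀ hin
  obtain ⟨c, j, k, hc₀, hcd, hj₀, hjp, rfl⟩ := exists_eq_add_mul_add_mul_gcd l r hlr i
  set p : ℤ := l + r
  set N : ℕ := n / (l + r)
  have hp : 0 < p := by simp only [p]; exact_mod_cast hlr
  have hdp : ((Nat.gcd l r : ℕ) : ℤ) ≤ p := by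
    simp only [p]
    exact_mod_cast Nat.le_of_dvd hlr (Nat.dvd_add (Nat.gcd_dvd_left l r) (Nat.gcd_dvd_right l r))
  have hnN : (n : ℤ) < (N + 1) * p := by
    have := Nat.lt_div_mul_add (a := n) hlr
    simp only [p, N]; push_cast at this ⊢; linarith
  have hk_lower : -(l : ℤ) ≤ k := by
    by_contra! hk
    nlinarith [mul_le_mul_of_nonneg_right (show k ≤ -l - 1 by omega) hp.le,
      mul_le_mul_of_nonneg_right (show j ≤ p - 1 by omega) (Int.natCast_nonneg l)]
  have hk_upper : k ≤ N := by
    by_contra! hk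
    nlinarith [mul_le_mul_of_nonneg_right (show (N : ℤ) + 1 ≤ k by omega) hp.le,
      mul_nonneg hj₀ (Int.natCast_nonneg l)]
  have key := add_mul_add_mul_of_step step (i₀ := c - l * p) (m := N + l + (l + r))
    (fun k hk => by
      convert base c.toNat (by omega) k hk using 1; rw [Int.toNat_of_nonneg hc₀]; ring)
    j.toNat (k + l).toNat (by omega)
  convert key using 1
  rw [Int.toNat_of_nonneg hj₀, Int.toNat_of_nonneg (by omega)]
  ring

theorem Set.ncard_image_le_ncard_image_of_factorsThrough {α β γ : Type*} {f : α → β} {g : α → γ}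
    {s : Set α} (hs : (g '' s).Finite) (h : ∀ x ∈ s, ∀ y ∈ s, g x = g y → f x = f y) :
    (f '' s).ncard ≤ (g '' s).ncard := by
  rcases s.eq_empty_or_nonempty with rfl | ⟨x₀, -⟩
  · simp
  have : Nonempty α := ⟨x₀⟩
  refine Set.ncard_le_ncard_of_injOn (g ∘ Function.invFunOn f s) ?_ ?_ hs
  · rintro _ ⟨x, hx, rfl⟩
    exact ⟨_, Function.invFunOn_mem ⟨x, hx, rfl⟩, rfl⟩
  · rintro _ ⟨x, hx, rfl⟩ _ ⟨y, hy, rfl⟩ hxy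
    rw [← Function.invFunOn_eq (f := f) ⟨x, hx, rfl⟩,
      ← Function.invFunOn_eq (f := f) ⟨y, hy, rfl⟩]
    exact h _ (Function.invFunOn_mem ⟨x, hx, rfl⟩) _ (Function.invFunOn_mem ⟨y, hy, rfl⟩) hxy

theorem blockCount_le_of_isRecoverable {Q : Type*} [Fintype Q] {l r : ℕ} (hlr : 0 < l + r)
    {X : Set (ℤ → Q)} (hX : IsRecoverable {-(l : ℤ), (r : ℤ)} X) (n : ℕ) :
    blockCount X n ≤ Fintype.card Q ^ (Nat.gcd l r * (n / (l + r) + l + (l + r) + 1)) := by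
  let sample : (ℤ → Q) → Fin (Nat.gcd l r) × Fin (n / (l + r) + l + (l + r) + 1) → Q :=
    fun x ck => x (ck.1 + ((ck.2 : ℤ) - l) * (l + r))
  rw [blockCount, Nat.card_coe_set_eq]
  calc _ ≤ (sample '' X).ncard := by
        refine Set.ncard_image_le_ncard_image_of_factorsThrough (Set.toFinite _)
          fun x hx y hy hxy => ?_
        funext i
        exact forall_Ico_of_step (P := fun i => x i = y i) hlr
          (fun i h₀ h₁ => hX.eq_add_of_eq_of_eq hx hy h₀ h₁) n
          (fun c hc k hk => congrFun hxy (⟨c, hc⟩, ⟨k, by omega⟩)) i (by positivity)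
          (by exact_mod_cast i.2)
    _ ≤ Nat.card (Fin (Nat.gcd l r) × Fin (n / (l + r) + l + (l + r) + 1) → Q) :=
        Set.ncard_le_card _
    _ = _ := by simp

def blockResidueSystem (Q : Type*) (p d : ℕ) : Set (ℤ → Q) :=
  Set.range fun u : ℤ × ℤ → Q => fun i => u (i / p, i % d)

theorem apply_add_eq_of_mem_blockResidueSystem {Q : Type*} {p d : ℕ} (hp : 0 < p)
    {x : ℤ → Q} (hx : x ∈ blockResidueSystem Q p d) {i s : ℤ} (hds : (d : ℤ) ∣ s)
    (h₀ : 0 ≤ i % p + s) (h₁ : i % p + s < p) : x (i + s) = x i := by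
  obtain ⟨u, rfl⟩ := hx
  obtain ⟨t, rfl⟩ := hds
  have hdiv : (i + d * t) / p = i / p :=
    ((Int.ediv_emod_unique (by exact_mod_cast hp)).2
      ⟨by linarith [Int.mul_ediv_add_emod i p], h₀, h₁⟩).1
  simp only [hdiv, Int.add_mul_emod_self_left]

theorem isRecoverable_blockResidueSystem (Q : Type*) {l r : ℕ} (hlr : 0 < l + r) :
    IsRecoverable {-(l : ℤ), (r : ℤ)} (blockResidueSystem Q (l + r) (Nat.gcd l r)) := by
  intro i
  have hp : (0 : ℤ) < ((l + r : ℕ) : ℤ) := by exact_mod_cast hlr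
  have h₀ := Int.emod_nonneg i hp.ne'
  have h₁ := Int.emod_lt_of_pos i hp
  by_cases h : i % ((l + r : ℕ) : ℤ) < l
  · refine ⟨fun x => x (i + r), fun x y hxy => hxy r (by simp), fun x hx => ?_⟩
    exact apply_add_eq_of_mem_blockResidueSystem hlr hx
      (Int.natCast_dvd_natCast.2 (Nat.gcd_dvd_right l r)) (by omega) (by omega)
  · refine ⟨fun x => x (i + -l), fun x y hxy => hxy (-l) (by simp), fun x hx => ?_⟩
    exact apply_add_eq_of_mem_blockResidueSystem hlr hx
      (Int.natCast_dvd_natCast.2 (Nat.gcd_dvd_left l r)).neg_right (by omega)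
      (by omega)

theorem pow_le_blockCount_blockResidueSystem (Q : Type*) [Fintype Q] [Nonempty Q] {p d : ℕ}
    (hp : 0 < p) (hdp : d ∣ p) (n : ℕ) :
    Fintype.card Q ^ (n / p * d) ≤ blockCount (blockResidueSystem Q p d) n := by
  have hlt : ∀ kc : Fin (n / p) × Fin d, kc.1 * p + kc.2 < n := fun ⟨⟨k, hk⟩, ⟨c, hc⟩⟩ =>
    calc k * p + c < (k + 1) * p := by nlinarith [Nat.le_of_dvd hp hdp]
      _ ≤ n / p * p := Nat.mul_le_mul_right _ hk
      _ ≤ n := Nat.div_mul_le_self n p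
  let sample : (ℤ → Q) → Fin (n / p) × Fin d → Q := fun x kc => x ((kc.1 * p + kc.2 : ℕ) : ℤ)
  have hsurj : sample '' blockResidueSystem Q p d = Set.univ := by
    refine Set.eq_univ_of_forall fun v => ?_
    have hinj : Function.Injective fun kc : Fin (n / p) × Fin d => ((kc.1 : ℤ), (kc.2 : ℤ)) :=
      fun a b h => by simpa [Prod.ext_iff, Fin.ext_iff] using h
    obtain ⟨u, rfl⟩ := hinj.surjective_comp_right (γ := Q) v
    refine ⟨_, ⟨u, rfl⟩, funext fun ⟨⟨k, hk⟩, ⟨c, hc⟩⟩ => ?_⟩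
    obtain ⟨t, rfl⟩ := hdp
    have hdiv : ((k * (d * t) + c : ℕ) : ℤ) / ((d * t : ℕ) : ℤ) = k :=
      ((Int.ediv_emod_unique (r := c) (q := k) (by exact_mod_cast hp)).2
        ⟨by push_cast; ring, by positivity,
          by exact_mod_cast hc.trans_le (Nat.le_of_dvd hp ⟨t, rfl⟩)⟩).1
    have hmod : ((k * (d * t) + c : ℕ) : ℤ) % (d : ℤ) = c := by
      rw [show ((k * (d * t) + c : ℕ) : ℤ) = c + d * (k * t) by push_cast; ring,
        Int.add_mul_emod_self_left, Int.emod_eq_of_lt (by positivity) (by exact_mod_cast hc)]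
    simp only [sample, Function.comp_apply, hdiv, hmod]
  calc Fintype.card Q ^ (n / p * d) = (sample '' blockResidueSystem Q p d).ncard := by
        simp [hsurj, Set.ncard_univ]
    _ ≤ _ := Set.ncard_image_le_ncard_image_of_factorsThrough (Set.toFinite _)
        fun x _ y _ hxy => funext fun kc => congrFun hxy ⟨_, hlt kc⟩
    _ = blockCount (blockResidueSystem Q p d) n := (Nat.card_coe_set_eq _).symm

theorem Real.logb_natCast_le_of_le_pow {q b e : ℕ} (hq : 1 < q) (h : b ≤ q ^ e) :
    Real.logb q b ≤ e := by
  rcases b.eq_zero_or_pos with rfl | hb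
  · simp
  rw [Real.logb_le_iff_le_rpow (by exact_mod_cast hq) (by exact_mod_cast hb), Real.rpow_natCast]
  exact_mod_cast h

theorem Real.le_logb_natCast_of_pow_le {q b e : ℕ} (hq : 1 < q) (h : q ^ e ≤ b) :
    (e : ℝ) ≤ Real.logb q b := by
  rw [Real.le_logb_iff_rpow_le (by exact_mod_cast hq)
    (by exact_mod_cast (Nat.pow_pos (n := e) (by omega)).trans_le h), Real.rpow_natCast]
  exact_mod_cast h

theorem tendsto_mul_add_div_natCast (α C : ℝ) :
    Tendsto (fun n : ℕ => (α * n + C) / n) atTop (𝓝 α) := by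
  have h : Tendsto (fun n : ℕ => α + C / n) atTop (𝓝 α) := by
    simpa using tendsto_const_nhds.add (tendsto_const_div_atTop_nhds_zero_nat C)
  refine h.congr' (eventually_ne_atTop 0 |>.mono fun n hn => ?_)
  field_simp

theorem rate_le_of_logb_blockCount_le {Q : Type*} {X : Set (ℤ → Q)} {q : ℕ} (hq : 1 < q)
    {α C : ℝ} (h : ∀ n : ℕ, Real.logb q (blockCount X n) ≤ α * n + C) : rate q X ≤ α := by
  have hnonneg (n : ℕ) : 0 ≤ Real.logb q (blockCount X n) / n := by
    refine div_nonneg ?_ n.cast_nonneg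
    rcases (blockCount X n).eq_zero_or_pos with h0 | hpos
    · simp [h0]
    · exact Real.logb_nonneg (by exact_mod_cast hq) (by exact_mod_cast hpos)
  have hlim := tendsto_mul_add_div_natCast α C
  calc rate q X ≤ limsup (fun n : ℕ => (α * n + C) / n) atTop :=
        limsup_le_limsup (.of_forall fun n => div_le_div_of_nonneg_right (h n) n.cast_nonneg)
          (isCoboundedUnder_le_of_le atTop hnonneg) hlim.isBoundedUnder_le
    _ = α := hlim.limsup_eq

theorem rate_eq_of_logb_blockCount_bounds {Q : Type*} {X : Set (ℤ → Q)} {q : ℕ} {α C₁ C₂ : ℝ}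
    (h₁ : ∀ n : ℕ, α * n + C₁ ≤ Real.logb q (blockCount X n))
    (h₂ : ∀ n : ℕ, Real.logb q (blockCount X n) ≤ α * n + C₂) : rate q X = α :=
  (tendsto_of_tendsto_of_tendsto_of_le_of_le (tendsto_mul_add_div_natCast α C₁)
    (tendsto_mul_add_div_natCast α C₂)
    (fun n => div_le_div_of_nonneg_right (h₁ n) n.cast_nonneg)
    (fun n => div_le_div_of_nonneg_right (h₂ n) n.cast_nonneg)).limsup_eq

theorem logb_blockCount_le_of_isRecoverable {Q : Type*} [Fintype Q] {l r q : ℕ}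
    (hlr : 0 < l + r) (hq : 1 < q) (hQ : Fintype.card Q = q) {X : Set (ℤ → Q)}
    (hX : IsRecoverable {-(l : ℤ), (r : ℤ)} X) (n : ℕ) :
    Real.logb q (blockCount X n) ≤
      (Nat.gcd l r : ℝ) / (l + r) * n + (Nat.gcd l r * (l + (l + r) + 1) : ℕ) := by
  have hdiv : ((n / (l + r) : ℕ) : ℝ) ≤ n / (l + r) := by exact_mod_cast Nat.cast_div_le
  calc Real.logb q (blockCount X n)
      ≤ (Nat.gcd l r * (n / (l + r) + l + (l + r) + 1) : ℕ) :=
        Real.logb_natCast_le_of_le_pow hq (hQ ▸ blockCount_le_of_isRecoverable hlr hX n)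
    _ ≤ _ := by
        push_cast
        rw [div_mul_eq_mul_div, mul_div_assoc]
        nlinarith [Nat.cast_nonneg (α := ℝ) (Nat.gcd l r)]

theorem rate_le_of_isRecoverable {Q : Type*} [Fintype Q] {l r q : ℕ} (hlr : 0 < l + r)
    (hq : 1 < q) (hQ : Fintype.card Q = q) {X : Set (ℤ → Q)}
    (hX : IsRecoverable {-(l : ℤ), (r : ℤ)} X) :
    rate q X ≤ (Nat.gcd l r : ℝ) / (l + r) :=
  rate_le_of_logb_blockCount_le hq (logb_blockCount_le_of_isRecoverable hlr hq hQ hX)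

theorem rate_blockResidueSystem {l r q : ℕ} (hlr : 0 < l + r) (hq : 1 < q) :
    rate q (blockResidueSystem (Fin q) (l + r) (Nat.gcd l r)) = (Nat.gcd l r : ℝ) / (l + r) := by
  have : NeZero q := ⟨by omega⟩
  refine rate_eq_of_logb_blockCount_bounds (C₁ := -Nat.gcd l r) (fun n => ?_)
    (logb_blockCount_le_of_isRecoverable hlr hq (Fintype.card_fin q)
      (isRecoverable_blockResidueSystem _ hlr))
  have hfloor : (n : ℝ) / (l + r) - 1 ≤ ((n / (l + r) : ℕ) : ℝ) := by
    have h : n < (n / (l + r) + 1) * (l + r) := by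
      rw [add_one_mul]; exact Nat.lt_div_mul_add hlr
    rw [sub_le_iff_le_add, div_le_iff₀ (by exact_mod_cast hlr)]
    exact_mod_cast h.le
  calc (Nat.gcd l r : ℝ) / (l + r) * n + -(Nat.gcd l r : ℝ)
      ≤ ((n / (l + r) * Nat.gcd l r : ℕ) : ℝ) := by
        push_cast
        rw [div_mul_eq_mul_div, mul_div_assoc]
        nlinarith [Nat.cast_nonneg (α := ℝ) (Nat.gcd l r)]
    _ ≤ _ := Real.le_logb_natCast_of_pow_le hq (by
        simpa using pow_le_blockCount_blockResidueSystem (Fin q) hlr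
          (Nat.dvd_add (Nat.gcd_dvd_left l r) (Nat.gcd_dvd_right l r)) n)

theorem stmt8_general (l r : ℕ) (hl : 1 ≤ l) (q : ℕ) (hq : 2 ≤ q) :
    sSup {x : ℝ | ∃ (Q : Type) (_ : Fintype Q), Fintype.card Q = q ∧
        ∃ X : Set (ℤ → Q),
          IsRecoverable ({-(l : ℤ), (r : ℤ)} : Set ℤ) X ∧ rate q X = x} =
      (Nat.gcd l r : ℝ) / ((l : ℝ) + (r : ℝ)) := by
  have hlr : 0 < l + r := by omega
  refine IsGreatest.csSup_eq ⟨⟨Fin q, inferInstance, Fintype.card_fin q, _,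
    isRecoverable_blockResidueSystem _ hlr, rate_blockResidueSystem hlr hq⟩, ?_⟩
  rintro x ⟨Q, _, hQ, X, hX, rfl⟩
  exact rate_le_of_isRecoverable hlr hq hQ hX

/-- For `R = {−l, r}`, the supremum of rates of `R`-recoverable systems over
alphabets of size `q` is `gcd(l,r)/(l+r)`. -/
theorem stmt8 (l r : ℕ) (hl : 1 ≤ l) (hr : 1 ≤ r) (q : ℕ) (hq : 2 ≤ q) :
    sSup {x : ℝ | ∃ (Q : Type) (_ : Fintype Q), Fintype.card Q = q ∧
        ∃ X : Set (ℤ → Q),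
          IsRecoverable ({-(l : ℤ), (r : ℤ)} : Set ℤ) X ∧ rate q X = x} =
      (Nat.gcd l r : ℝ) / ((l : ℝ) + (r : ℝ)) :=
  stmt8_general l r hl q hq
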